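/- Let M be a loopless, coloopless, non-uniform matroid on finite ground set E. Then there exists a chain of biflats of M of length exactly |E| − 1 (hence the biflats complex has dimension |E| − 1). -/

import Mathlib

open Matroid

variable {α : Type*}

/-- A matroid is loopless if every singleton of the ground set is independent. -/
def MatroidLoopless (M : Matroid α) : Prop := ∀ a ∈ M.E, M.Indep {a}

/-- A matroid is coloopless if its dual is loopless. -/
def MatroidColoopless (M : Matroid α) : Prop := ∀ a ∈ M.E, M✶.Indep {a}

/-- `F|G` is a biflat of `M`: `F` is a nonempty flat of `M`, `G` a nonempty flat of `M✶`,
at least one of them is proper, and `F ∪ G = E`. -/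
def IsBiflat (M : Matroid α) (F G : Set α) : Prop :=
  M.IsFlat F ∧ M✶.IsFlat G ∧ F.Nonempty ∧ G.Nonempty ∧ (F ≠ M.E ∨ G ≠ M.E) ∧ F ∪ G = M.E

/-- The order on biflats: inclusion in the first component, reverse inclusion in the second. -/
def BiflatLE (p q : Set α × Set α) : Prop := p.1 ⊆ q.1 ∧ q.2 ⊆ p.2

/-- The rank of a matroid: the (common) cardinality of its bases. -/
noncomputable def matroidRank (M : Matroid α) : ℕ :=
  sSup (Set.ncard '' {B | M.IsBase B})

/-- A circuit: a minimal dependent set. -/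
def IsCircuitOf (M : Matroid α) (C : Set α) : Prop :=
  C ⊆ M.E ∧ ¬ M.Indep C ∧ ∀ D ⊂ C, M.Indep D

/-- A matroid is uniform if the independent subsets of the ground set are exactly those of
size at most the rank. -/
def MatroidIsUniform (M : Matroid α) : Prop :=
  ∀ I ⊆ M.E, (M.Indep I ↔ I.ncard ≤ matroidRank M)

section
open Set

lemma flat_of_closure (M : Matroid α) (X : Set α) : M.IsFlat (M.closure X) := by
  haveI : Nonempty ↑{F | M.IsFlat F ∧ X ∩ M.E ⊆ F} :=
    ⟨⟨M.E, M.ground_isFlat, inter_subset_right⟩⟩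
  rw [Matroid.closure_def, sInter_eq_iInter]
  exact Matroid.IsFlat.iInter fun i => i.2.1

lemma matroidRank_eq {M : Matroid α} {B : Set α} (hB : M.IsBase B) : matroidRank M = B.ncard := by
  have h : Set.ncard '' {B' | M.IsBase B'} = {B.ncard} := by
    ext x
    constructor
    · rintro ⟨B', hB', rfl⟩
      exact hB'.ncard_eq_ncard_of_isBase hB
    · rintro rfl
      exact ⟨B, hB, rfl⟩
  rw [matroidRank, h, csSup_singleton]

lemma exists_circuit_subset (M : Matroid α) :
    ∀ (n : ℕ) (D : Set α), D.ncard = n → D ⊆ M.E → D.Finite → ¬ M.Indep D →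
    ∃ C, C ⊆ D ∧ ¬ M.Indep C ∧ ∀ X, X ⊂ C → M.Indep X := by
  intro n
  induction n using Nat.strong_induction_on with
  | _ n ih =>
    intro D hcard hDE hfin hdep
    by_cases h : ∀ X, X ⊂ D → M.Indep X
    · exact ⟨D, Subset.rfl, hdep, h⟩
    · push_neg at h
      obtain ⟨X, hXD, hXdep⟩ := h
      obtain ⟨C, hCX, h1, h2⟩ := ih X.ncard (hcard ▸ Set.ncard_lt_ncard hXD hfin) X rfl
        (hXD.subset.trans hDE) (hfin.subset hXD.subset) hXdep
      exact ⟨C, hCX.trans hXD.subset, h1, h2⟩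


/-- a loopless, coloopless, non-uniform matroid on a finite ground set `E`
has a strict chain of biflats with exactly `|E| - 1` elements. -/
theorem exists_bichain_of_max_length (M : Matroid α) [M.Finite]
    (hl : MatroidLoopless M) (hcl : MatroidColoopless M)
    (hnu : ¬ MatroidIsUniform M) :
    ∃ f : Fin (M.E.ncard - 1) → Set α × Set α,
      (∀ i, IsBiflat M (f i).1 (f i).2) ∧
      ∀ i j, i < j → BiflatLE (f i) (f j) ∧ f i ≠ f j := by
  classical
  have hEfin : M.E.Finite := M.ground_finite
  set r := matroidRank M with hr
  have key : ∀ I, M.Indep I → I.ncard ≤ r := by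
    intro I hI
    obtain ⟨B, hB, hIB⟩ := hI.exists_isBase_superset
    rw [hr, matroidRank_eq hB]
    exact ncard_le_ncard hIB (hEfin.subset hB.subset_ground)
  simp only [MatroidIsUniform, not_forall] at hnu
  obtain ⟨D, hDE, hDiff⟩ := hnu
  have hDdep : ¬ M.Indep D := fun h => hDiff (iff_of_true h (key D h))
  have hDr : D.ncard ≤ r := by
    by_contra h'
    exact hDiff (iff_of_false hDdep h')
  obtain ⟨C, hCD, hCdep, hCmin⟩ :=
    exists_circuit_subset M D.ncard D rfl hDE (hEfin.subset hDE) hDdep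
  have hCE : C ⊆ M.E := hCD.trans hDE
  have hCfin : C.Finite := hEfin.subset hCE
  have hCr : C.ncard ≤ r := le_trans (ncard_le_ncard hCD (hEfin.subset hDE)) hDr
  have hCne : C.Nonempty := by
    rcases C.eq_empty_or_nonempty with h | h
    · exact absurd (h ▸ M.empty_indep) hCdep
    · exact h
  obtain ⟨c, hc⟩ := hCne
  have hC2 : ∃ d ∈ C, d ≠ c := by
    by_contra h
    push_neg at h
    have hCc : C = {c} := subset_antisymm (fun x hx => h x hx) (singleton_subset_iff.2 hc)
    exact hCdep (hCc ▸ hl c (hCE hc))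
  -- the closure property of circuits
  have hcl_circ : ∀ e ∈ C, e ∈ M.closure (C \ {e}) := by
    intro e he
    have hind : M.Indep (C \ {e}) := hCmin _ (sdiff_singleton_ssubset.2 he)
    rw [hind.mem_closure_iff_of_notMem (by simp), insert_diff_singleton,
      insert_eq_self.2 he]
    exact ⟨hCdep, hCE⟩
  set I0 := C \ {c} with hI0def
  have hI0indep : M.Indep I0 := hCmin _ (sdiff_singleton_ssubset.2 hc)
  have hcclI0 : c ∈ M.closure I0 := hcl_circ c hc
  obtain ⟨B, hB, hI0B⟩ := hI0indep.exists_isBase_superset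
  have hBE : B ⊆ M.E := hB.subset_ground
  have hBfin : B.Finite := hEfin.subset hBE
  have hrB : B.ncard = r := (matroidRank_eq hB).symm
  have hcB : c ∉ B := by
    intro h
    refine hCdep (hB.indep.subset fun x hx => ?_)
    by_cases hxc : x = c
    · exact hxc ▸ h
    · exact hI0B ⟨hx, hxc⟩
  have hCcard1 : 1 ≤ C.ncard := by
    have := Set.ncard_pos hCfin |>.2 ⟨c, hc⟩
    omega
  have hCcard2 : 2 ≤ C.ncard := by
    obtain ⟨d, hd, hdc⟩ := hC2
    exact (Set.one_lt_ncard_iff hCfin).2 ⟨d, c, hd, hc, hdc⟩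
  have hI0card : I0.ncard = C.ncard - 1 := by
    rw [hI0def, Set.ncard_diff_singleton_of_mem hc]
  have hbex : (B \ I0).Nonempty := by
    rw [Set.nonempty_iff_ne_empty]
    intro h
    have hBI0 : B = I0 := subset_antisymm (Set.diff_eq_empty.1 h) hI0B
    rw [hBI0, hI0card] at hrB
    omega
  obtain ⟨b, hbB, hbI0⟩ := hbex
  set I := B \ {b} with hIdef
  have hIindep : M.Indep I := hB.indep.subset diff_subset
  have hIE : I ⊆ M.E := diff_subset.trans hBE
  have hI0I : I0 ⊆ I := subset_diff_singleton hI0B hbI0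
  set F := M.closure I with hFdef
  have hFflat : M.IsFlat F := flat_of_closure M I
  have hIF : I ⊆ F := M.subset_closure I hIE
  have hcF : c ∈ F := M.closure_subset_closure hI0I hcclI0
  have hCF : C ⊆ F := by
    intro x hx
    by_cases hxc : x = c
    · exact hxc ▸ hcF
    · exact hIF (hI0I ⟨hx, hxc⟩)
  have hbF : b ∉ F := hB.indep.notMem_closure_diff_of_mem hbB
  have hbE : b ∈ M.E := hBE hbB
  have hFne : F ≠ M.E := fun h => hbF (h ▸ hbE)
  set G := M.E \ C with hGdef
  have hcG : c ∉ G := fun h => h.2 hc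
  have hGne : G ≠ M.E := fun h => hcG (h ▸ hCE hc)
  have hGnonempty : G.Nonempty := ⟨b, hbE, fun hbC => hbF (hCF hbC)⟩
  have hFG : F ∪ G = M.E := by
    apply subset_antisymm
    · exact union_subset (M.closure_subset_ground I) diff_subset
    · intro x hx
      by_cases hxC : x ∈ C
      · exact Or.inl (hCF hxC)
      · exact Or.inr ⟨hx, hxC⟩
  -- dual side
  set Bd := M.E \ B with hBddef
  have hBd : M✶.IsBase Bd := hB.compl_isBase_dual
  set J := Bd \ {c} with hJdef
  have hJindep : M✶.Indep J := hBd.indep.subset diff_subset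
  have hJE : J ⊆ M.E := fun x hx => hx.1.1
  have hJE' : J ⊆ M✶.E := hJE
  have hJB : ∀ x ∈ J, x ∉ B := fun x hx => hx.1.2
  have hJG : J ⊆ G := by
    rintro x ⟨⟨hxE, hxB⟩, hxc⟩
    refine ⟨hxE, fun hxC => hxB (hI0B ⟨hxC, hxc⟩)⟩
  -- every element of B outside C is in the dual closure of J
  have hdepJ : ∀ e ∈ B, e ∉ C → e ∈ M✶.closure J := by
    intro e heB heC
    have heJ : e ∉ J := fun h => (hJB e h) heB
    rw [hJindep.mem_closure_iff_of_notMem heJ]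
    refine ⟨fun hind => ?_, insert_subset (hBE heB) hJE'⟩
    rw [Matroid.dual_indep_iff_exists (insert_subset (hBE heB) hJE)] at hind
    obtain ⟨B', hB', hdisj⟩ := hind
    have hB'sub : B' ⊆ insert c (B \ {e}) := by
      intro x hx
      have hxE : x ∈ M.E := hB'.subset_ground hx
      have hxnot : x ∉ insert e J := fun h => (hdisj.ne_of_mem h hx) rfl
      by_cases hxc : x = c
      · exact Or.inl hxc
      · refine Or.inr ⟨?_, fun hxe => hxnot (hxe ▸ Or.inl rfl)⟩
        by_contra hxB
        exact hxnot (Or.inr ⟨⟨hxE, hxB⟩, hxc⟩)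
    have hc_cl : c ∈ M.closure (B \ {e}) := by
      refine M.closure_subset_closure ?_ hcclI0
      intro x hx
      exact ⟨hI0B hx, fun hxe => heC (hxe ▸ hx.1)⟩
    have hdep : ¬ M.Indep (insert c (B \ {e})) := by
      intro hind2
      have := (hB.indep.subset diff_subset).insert_dep_iff.2 ⟨hc_cl, fun h => hcB h.1⟩
      exact this.not_indep hind2
    have hcard : (insert c (B \ {e})).ncard = r := by
      rw [Set.ncard_insert_of_notMem (fun h => hcB h.1) ((hBfin.subset diff_subset)),
        Set.ncard_diff_singleton_of_mem heB]
      have : 1 ≤ B.ncard := Set.ncard_pos hBfin |>.2 ⟨e, heB⟩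
      omega
    have hB'eq : B' = insert c (B \ {e}) :=
      Set.eq_of_subset_of_ncard_le hB'sub (by rw [hcard, ← matroidRank_eq hB'])
        (hEfin.subset (insert_subset (hCE hc) (diff_subset.trans hBE)))
    exact hdep (hB'eq ▸ hB'.indep)
  -- every element of C is dual-independent over J
  have hindepJ : ∀ e ∈ C, M✶.Indep (insert e J) := by
    intro e heC
    rw [Matroid.dual_indep_iff_exists (insert_subset (hCE heC) hJE)]
    by_cases hec : e = c
    · subst hec
      refine ⟨B, hB, ?_⟩
      rw [Set.disjoint_left]
      rintro x (rfl | hxJ)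
      · exact hcB
      · exact hJB x hxJ
    · have heB : e ∈ B := hI0B ⟨heC, hec⟩
      have hBe_ind : M.Indep (B \ {e}) := hB.indep.subset diff_subset
      have hCe_sub : C \ {e} ⊆ insert c (B \ {e}) := by
        rintro x ⟨hxC, hxe⟩
        by_cases hxc : x = c
        · exact Or.inl hxc
        · exact Or.inr ⟨hI0B ⟨hxC, hxc⟩, hxe⟩
      have hcBe : c ∉ M.closure (B \ {e}) := by
        intro hmem
        have h1 : C \ {e} ⊆ M.closure (B \ {e}) := by
          rintro x ⟨hxC, hxe⟩
          by_cases hxc : x = c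
          · exact hxc ▸ hmem
          · exact M.subset_closure _ (diff_subset.trans hBE) ⟨hI0B ⟨hxC, hxc⟩, hxe⟩
        have h2 : M.closure (C \ {e}) ⊆ M.closure (B \ {e}) :=
          M.closure_subset_closure_of_subset_closure h1
        exact hB.indep.notMem_closure_diff_of_mem heB (h2 (hcl_circ e heC))
      have hcnotBe : c ∉ B \ {e} := fun h => hcB h.1
      have hB''ind : M.Indep (insert c (B \ {e})) := by
        rw [hBe_ind.insert_indep_iff_of_notMem hcnotBe]
        exact ⟨hCE hc, hcBe⟩
      have hB''base : M.IsBase (insert c (B \ {e})) := by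
        apply hB''ind.isBase_of_ground_subset_closure
        have he_in : e ∈ M.closure (insert c (B \ {e})) := by
          refine M.closure_subset_closure_of_subset_closure ?_ (hcl_circ e heC)
          exact fun x hx => M.subset_closure _
            (insert_subset (hCE hc) (diff_subset.trans hBE)) (hCe_sub hx)
        have hcleq : M.closure (insert e (insert c (B \ {e}))) =
            M.closure (insert c (B \ {e})) := Matroid.closure_insert_eq_of_mem_closure he_in
        have hBsub : B ⊆ insert e (insert c (B \ {e})) := by
          intro x hx
          by_cases hxe : x = e
          · exact Or.inl hxe
          · exact Or.inr (Or.inr ⟨hx, hxe⟩)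
        calc M.E = M.closure B := hB.closure_eq.symm
          _ ⊆ M.closure (insert e (insert c (B \ {e}))) := M.closure_subset_closure hBsub
          _ = M.closure (insert c (B \ {e})) := hcleq
      refine ⟨_, hB''base, ?_⟩
      rw [Set.disjoint_left]
      rintro x (rfl | hxJ)
      · rintro (rfl | hxBe)
        · exact hec rfl
        · exact hxBe.2 rfl
      · rintro (rfl | hxBe)
        · exact hxJ.2 rfl
        · exact hJB x hxJ hxBe.1
  -- the dual closure of J is G
  have hclJ : M✶.closure J = G := by
    apply subset_antisymm
    · intro x hx
      have hxE : x ∈ M.E := M✶.closure_subset_ground J hx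
      refine ⟨hxE, fun hxC => ?_⟩
      have hxJ : x ∉ J := fun h => (hJG h).2 hxC
      have := (hJindep.insert_indep_iff_of_notMem hxJ).1 (hindepJ x hxC)
      exact this.2 hx
    · rintro x ⟨hxE, hxC⟩
      by_cases hxB : x ∈ B
      · exact hdepJ x hxB hxC
      · exact M✶.subset_closure J hJE' ⟨⟨hxE, hxB⟩, fun h => hxC (h ▸ hc)⟩
  have hGflat : M✶.IsFlat G := hclJ ▸ flat_of_closure M✶ J
  -- enumerations and counting
  have hIfin : I.Finite := hBfin.subset diff_subset
  have hBdfin : Bd.Finite := hEfin.subset diff_subset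
  have hJfin : J.Finite := hBdfin.subset diff_subset
  obtain ⟨m1, fI, hfIinj, hfIrange⟩ := hIfin.fin_param
  obtain ⟨m2, fJ, hfJinj, hfJrange⟩ := hJfin.fin_param
  have hm1 : I.ncard = m1 := by
    rw [← hfIrange, ← image_univ, ncard_image_of_injective _ hfIinj, ncard_univ,
      Nat.card_eq_fintype_card, Fintype.card_fin]
  have hm2 : J.ncard = m2 := by
    rw [← hfJrange, ← image_univ, ncard_image_of_injective _ hfJinj, ncard_univ,
      Nat.card_eq_fintype_card, Fintype.card_fin]
  have hIcard : I.ncard = r - 1 := by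
    rw [hIdef, Set.ncard_diff_singleton_of_mem hbB, hrB]
  have hcBd : c ∈ Bd := ⟨hCE hc, hcB⟩
  have hBdcard : Bd.ncard = M.E.ncard - r := by
    rw [hBddef, Set.ncard_diff hBE hBfin, hrB]
  have hJcard : J.ncard = M.E.ncard - r - 1 := by
    rw [hJdef, Set.ncard_diff_singleton_of_mem hcBd, hBdcard]
  have hrltn : r < M.E.ncard := by
    rw [← hrB]
    exact Set.ncard_lt_ncard
      (ssubset_iff_subset_ne.mpr ⟨hBE, fun h => hcB (h ▸ hCE hc)⟩) hEfin
  have hr2 : 2 ≤ r := le_trans hCcard2 hCr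
  have hm1pos : 0 < m1 := by omega
  have hcount : M.E.ncard - 1 = m1 + 1 + m2 := by omega
  -- the chain
  set Q : ℕ → Set α := fun k => M.closure (fI '' {i | (i : ℕ) ≤ k}) with hQdef
  set P : ℕ → Set α := fun s => M✶.closure (fJ '' {i | (i : ℕ) < s}) with hPdef
  have hQI : ∀ k, fI '' {i | (i : ℕ) ≤ k} ⊆ I := by
    intro k
    rw [← hfIrange]
    exact image_subset_range _ _
  have hQF : ∀ k, Q k ⊆ F := fun k => M.closure_subset_closure (hQI k)
  have hQE : ∀ k, Q k ⊆ M.E := fun k => M.closure_subset_ground _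
  have hQne : ∀ k, (Q k).Nonempty := fun k =>
    ⟨fI ⟨0, hm1pos⟩, M.subset_closure _ ((hQI k).trans hIE)
      ⟨⟨0, hm1pos⟩, Nat.zero_le k, rfl⟩⟩
  have hQneE : ∀ k, Q k ≠ M.E := fun k h => hbF (hQF k (h.symm ▸ hbE))
  have hQmono : ∀ k k', k ≤ k' → Q k ⊆ Q k' := fun k k' h =>
    M.closure_subset_closure (image_mono (fun i hi => le_trans hi h))
  have hQstrict : ∀ k k', k < k' → k' < m1 → Q k ⊂ Q k' := by
    intro k k' hkk' hk'
    refine (hIindep.subset (hQI k')).closure_ssubset_closure ?_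
    refine ssubset_of_subset_of_ne (image_mono fun i hi => le_trans hi hkk'.le) ?_
    intro heq
    have hmem : fI ⟨k', hk'⟩ ∈ fI '' {i | (i : ℕ) ≤ k} :=
      heq.symm ▸ ⟨⟨k', hk'⟩, by simp, rfl⟩
    obtain ⟨i, hi, hieq⟩ := hmem
    have hieq2 := hfIinj hieq
    rw [hieq2] at hi
    simp only [mem_setOf_eq] at hi
    omega
  have hPJ : ∀ s, fJ '' {i | (i : ℕ) < s} ⊆ J := by
    intro s
    rw [← hfJrange]
    exact image_subset_range _ _
  have hPG : ∀ s, P s ⊆ G := fun s => hclJ ▸ M✶.closure_subset_closure (hPJ s)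
  have hPE : ∀ s, P s ⊆ M.E := fun s => M✶.closure_subset_ground _
  have hPne : ∀ s, 1 ≤ s → s ≤ m2 → (P s).Nonempty := by
    intro s h1 h2
    exact ⟨fJ ⟨0, lt_of_lt_of_le h1 h2⟩, M✶.subset_closure _ ((hPJ s).trans hJE')
      ⟨⟨0, lt_of_lt_of_le h1 h2⟩, h1, rfl⟩⟩
  have hPneE : ∀ s, P s ≠ M.E := fun s h => hcG (hPG s (h.symm ▸ hCE hc))
  have hPmono : ∀ s s', s ≤ s' → P s ⊆ P s' := fun s s' h =>
    M✶.closure_subset_closure (image_mono (fun i hi => lt_of_lt_of_le hi h))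
  have hPstrict : ∀ s s', s < s' → s' ≤ m2 → P s ⊂ P s' := by
    intro s s' hss' hs'
    refine (hJindep.subset (hPJ s')).closure_ssubset_closure ?_
    refine ssubset_of_subset_of_ne (image_mono fun i hi => lt_trans hi hss') ?_
    intro heq
    have hsm2 : s < m2 := lt_of_lt_of_le hss' hs'
    have hmem : fJ ⟨s, hsm2⟩ ∈ fJ '' {i | (i : ℕ) < s} :=
      heq.symm ▸ ⟨⟨s, hsm2⟩, by simpa using hss', rfl⟩
    obtain ⟨i, hi, hieq⟩ := hmem
    have hieq2 := hfJinj hieq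
    rw [hieq2] at hi
    simp only [mem_setOf_eq] at hi
    omega
  set g : ℕ → Set α × Set α := fun k =>
    if k < m1 then (Q k, M.E) else if k = m1 then (F, G)
    else (M.E, P (m2 - (k - m1 - 1))) with hgdef
  have hgA : ∀ k, k < m1 → g k = (Q k, M.E) := by
    intro k hk
    simp only [hgdef, if_pos hk]
  have hgB : g m1 = (F, G) := by
    simp [hgdef]
  have hgC : ∀ k, m1 < k → g k = (M.E, P (m2 - (k - m1 - 1))) := by
    intro k hk
    simp only [hgdef, if_neg (by omega : ¬ k < m1), if_neg (by omega : ¬ k = m1)]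
  refine ⟨fun i => g i.val, ?_, ?_⟩
  · intro i
    show IsBiflat M (g (i : ℕ)).1 (g (i : ℕ)).2
    have hi : (i : ℕ) < m1 + 1 + m2 := by
      have := i.isLt
      omega
    rcases lt_trichotomy (i : ℕ) m1 with h | h | h
    · rw [hgA _ h]
      exact ⟨flat_of_closure M _, M✶.ground_isFlat, hQne _, ⟨c, hCE hc⟩,
        Or.inl (hQneE _), union_eq_self_of_subset_left (hQE _)⟩
    · rw [h, hgB]
      exact ⟨hFflat, hGflat, ⟨c, hcF⟩, hGnonempty, Or.inl hFne, hFG⟩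
    · rw [hgC _ h]
      refine ⟨M.ground_isFlat, flat_of_closure M✶ _, ⟨c, hCE hc⟩,
        hPne _ (by omega) (by omega), Or.inr (hPneE _), ?_⟩
      exact union_eq_self_of_subset_right (hPE _)
  · intro i j hij
    show BiflatLE (g (i : ℕ)) (g (j : ℕ)) ∧ g (i : ℕ) ≠ g (j : ℕ)
    have hij' : (i : ℕ) < (j : ℕ) := hij
    have hj : (j : ℕ) < m1 + 1 + m2 := by
      have := j.isLt
      omega
    rcases lt_trichotomy (i : ℕ) m1 with hi1 | hi1 | hi1 <;>
      rcases lt_trichotomy (j : ℕ) m1 with hj1 | hj1 | hj1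
    · -- A A
      rw [hgA _ hi1, hgA _ hj1]
      refine ⟨⟨(hQstrict _ _ hij' hj1).subset, Subset.rfl⟩, ?_⟩
      intro h
      exact (hQstrict _ _ hij' hj1).ne (congrArg Prod.fst h)
    · -- A B
      rw [hgA _ hi1, hj1, hgB]
      exact ⟨⟨(hQF _), diff_subset⟩, fun h => hGne (congrArg Prod.snd h).symm⟩
    · -- A C
      rw [hgA _ hi1, hgC _ hj1]
      exact ⟨⟨hQE _, hPE _⟩, fun h => hPneE _ (congrArg Prod.snd h).symm⟩
    · omega
    · omega
    · -- B C
      rw [show (i : ℕ) = m1 from hi1, hgB, hgC _ hj1]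
      exact ⟨⟨hFflat.subset_ground, hPG _⟩, fun h => hFne (congrArg Prod.fst h)⟩
    · omega
    · omega
    · -- C C
      rw [hgC _ hi1, hgC _ hj1]
      have hs : m2 - ((j : ℕ) - m1 - 1) < m2 - ((i : ℕ) - m1 - 1) := by omega
      refine ⟨⟨Subset.rfl, (hPstrict _ _ hs (by omega)).subset⟩, ?_⟩
      intro h
      exact (hPstrict _ _ hs (by omega)).ne (congrArg Prod.snd h).symm

end
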